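/- Let (P, α) be an equipartition of G with all entries of α positive, and for each k = 1,…,ν let f^{(k)} be a normalized eigenvector of the block L^{∂P}(G_k, α) for its smallest eigenvalue λ_1(G_k,α) with all entries strictly positive on V_k. Then the following are equivalent: (i) there exist c_1,…,c_ν > 0 such that c_{s(i)} (f^{(s(i))}_i)² = c_{s(j)} (f^{(s(j))}_j)² / α_ij² for every oriented boundary edge (i,j) ∈ ∂P, where s(i) denotes the index of the part containing i; (ii) there is an eigenvector ψ of L^{∂P} with strictly positive entries and eigenvalue Λ(P,α) such that α_ij = ψ_j/ψ_i for every oriented boundary edge (i,j) ∈ ∂P. -/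

import Mathlib

open Matrix Finset

noncomputable section

variable {V : Type*}

/-- The signed Laplacian of the weighted graph `(G,w)` with signature `σ`. -/
def signedLaplacian [Fintype V] [DecidableEq V] (G : SimpleGraph V) [DecidableRel G.Adj]
    (w σ : V → V → ℝ) : Matrix V V ℝ :=
  Matrix.of fun i j =>
    if i = j then ∑ k, if G.Adj i k then w i k else 0
    else if G.Adj i j then -(σ i j * w i j) else 0

/-- The `n`-th smallest eigenvalue (1-based, counted with multiplicity) of a real
symmetric matrix; junk value `0` if the matrix is not Hermitian or `n` is out of range. -/
def nthEigenvalue [Fintype V] [DecidableEq V] (A : Matrix V V ℝ) (n : ℕ) : ℝ :=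
  if h : A.IsHermitian ∧ n - 1 < Fintype.card V then
    let f : Fin (Fintype.card V) → ℝ := fun i => h.1.eigenvalues ((Fintype.equivFin V).symm i)
    f (Tuple.sort f ⟨n - 1, h.2⟩)
  else 0

/-- `μ` is a simple eigenvalue of `A`: its eigenspace is one-dimensional. -/
def IsSimpleEigenvalue [Fintype V] [DecidableEq V] (A : Matrix V V ℝ) (μ : ℝ) : Prop :=
  Module.finrank ℝ (Module.End.eigenspace (Matrix.toLin' A) μ) = 1

/-- The nodal set of `u` with respect to the signature `σ`, as a set of (unordered) edges. -/
def nodalEdges (G : SimpleGraph V) (σ : V → V → ℝ) (u : V → ℝ) : Set (Sym2 V) :=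
  {e | ∃ i j, e = s(i, j) ∧ G.Adj i j ∧ u i * σ i j * u j < 0}

/-- The number of nodal domains of `u` on `(G,σ)`: the number of connected components
of the spanning subgraph obtained by deleting the nodal set. -/
def nodalCount (G : SimpleGraph V) (σ : V → V → ℝ) (u : V → ℝ) : ℕ :=
  Nat.card (G.deleteEdges (nodalEdges G σ u)).ConnectedComponent

/-- `(G,σ)` is balanced: every cycle has positive sign. -/
def IsBalanced (G : SimpleGraph V) (σ : V → V → ℝ) : Prop :=
  ∀ ⦃v : V⦄ (p : G.Walk v v), p.IsCycle →
    0 < (p.darts.map fun d => σ d.toProd.1 d.toProd.2).prod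

/-- The matrix `B_{ij}(a)`. -/
def Bmat [DecidableEq V] (i j : V) (a : ℝ) : Matrix V V ℝ :=
  Matrix.of fun x y =>
    if x = i ∧ y = i then a
    else if x = j ∧ y = j then a⁻¹
    else if (x = i ∧ y = j) ∨ (x = j ∧ y = i) then -1
    else 0

/-- The signature `σ^{∂P}` determined by the partition `P`. -/
def partSgn {ν : ℕ} (P : V → Fin ν) (i j : V) : ℝ :=
  if P i = P j then 1 else -1

/-- `L^{∂P}(P,α)`: the partition Laplacian perturbed by the rank-one parameter matrices
on the oriented boundary edges `O`. -/
def paramMatrix [Fintype V] [DecidableEq V] (G : SimpleGraph V) [DecidableRel G.Adj]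
    (w : V → V → ℝ) {ν : ℕ} (P : V → Fin ν) (O : Finset (V × V)) (α : V × V → ℝ) :
    Matrix V V ℝ :=
  signedLaplacian G w (partSgn P) + ∑ p ∈ O, w p.1 p.2 • Bmat p.1 p.2 (α p)

/-- The principal submatrix of `M` on the `k`-th part of the partition `P`. -/
def blockMatrix {ν : ℕ} (M : Matrix V V ℝ) (P : V → Fin ν) (k : Fin ν) :
    Matrix {v : V // P v = k} {v : V // P v = k} ℝ :=
  M.submatrix Subtype.val Subtype.val

/-- `λ₁(G_k, α)`: the smallest eigenvalue of the block of `L^{∂P}(P,α)` on part `k`. -/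
def lam1Block [Fintype V] [DecidableEq V] {ν : ℕ} (M : Matrix V V ℝ) (P : V → Fin ν)
    (k : Fin ν) : ℝ :=
  nthEigenvalue (blockMatrix M P k) 1

/-- The partition energy `Λ(P, α) = max_k λ₁(G_k, α)`. -/
def PartitionEnergy [Fintype V] [DecidableEq V] (G : SimpleGraph V) [DecidableRel G.Adj]
    (w : V → V → ℝ) {ν : ℕ} (P : V → Fin ν) (O : Finset (V × V)) (α : V × V → ℝ) : ℝ :=
  ⨆ k : Fin ν, lam1Block (paramMatrix G w P O α) P k

/-- `(P, α)` is an equipartition: all the first block eigenvalues agree. -/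
def IsEquipartition [Fintype V] [DecidableEq V] (G : SimpleGraph V) [DecidableRel G.Adj]
    (w : V → V → ℝ) {ν : ℕ} (P : V → Fin ν) (O : Finset (V × V)) (α : V × V → ℝ) : Prop :=
  ∀ k l : Fin ν, lam1Block (paramMatrix G w P O α) P k = lam1Block (paramMatrix G w P O α) P l

/-!
Let `M = L^{∂P}(P,α)`. The entries of `B_ij(α_ij)` at `(i,j)` and `(j,i)` cancel the signed
boundary entries of `L^{∂P}`, so `M` is block diagonal, and `Σ w_ij B_ij(α_ij)` annihilates every
nowhere-vanishing `ψ` with `α_ij = ψ_j / ψ_i`; for such `ψ`, `L^{∂P} ψ = M ψ`. Hence (ii) says that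
`M` has a positive eigenvector for `Λ(P,α)` compatible with `α`. For (i) ⇒ (ii), glue the vectors
`√c_k f^{(k)}`: condition (i) is exactly the compatibility with `α`. For (ii) ⇒ (i), each block is
an irreducible matrix with nonpositive off-diagonal entries (`G_k` is connected), so its positive
eigenvectors for `λ₁(G_k,α) = Λ(P,α)` are proportional: `ψ|_{V_k} = t_k f^{(k)}`, and `c_k = t_k²`.
-/

section Bmat

variable [DecidableEq V]

lemma Bmat_apply_of_ne {i j x y : V} (a : ℝ) (hxy : x ≠ y) :
    Bmat i j a x y = -((if (i, j) = (x, y) then 1 else 0) + if (i, j) = (y, x) then 1 else 0) := by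
  simp only [Bmat, of_apply, Prod.mk.injEq]
  by_cases h1 : i = x <;> by_cases h2 : j = y <;> by_cases h3 : i = y <;> by_cases h4 : j = x <;>
    subst_vars <;> simp_all [eq_comm]

lemma Bmat_mulVec_eq_zero [Fintype V] {i j : V} {ψ : V → ℝ} (hij : i ≠ j) (hi : ψ i ≠ 0)
    (hj : ψ j ≠ 0) : Bmat i j (ψ j / ψ i) *ᵥ ψ = 0 := by
  ext x
  rw [mulVec, dotProduct, Fintype.sum_eq_add i j hij, Pi.zero_apply]
  · by_cases hxi : x = i
    · subst hxi; simp [Bmat, hij, hij.symm, hi]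
    by_cases hxj : x = j
    · subst hxj; simp [Bmat, hij, hij.symm, hj]
    simp [Bmat, hxi, hxj]
  · rintro y ⟨hyi, hyj⟩
    simp [Bmat, hyi, hyj]

lemma signedLaplacian_apply_of_ne [Fintype V] (G : SimpleGraph V) [DecidableRel G.Adj]
    (w σ : V → V → ℝ) {x y : V} (hxy : x ≠ y) :
    signedLaplacian G w σ x y = if G.Adj x y then -(σ x y * w x y) else 0 := by
  simp [signedLaplacian, hxy]

def boundaryMatrix (w : V → V → ℝ) (O : Finset (V × V)) (α : V × V → ℝ) : Matrix V V ℝ :=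
  ∑ p ∈ O, w p.1 p.2 • Bmat p.1 p.2 (α p)

lemma boundaryMatrix_apply_of_ne (w : V → V → ℝ) (O : Finset (V × V)) (α : V × V → ℝ)
    {x y : V} (hxy : x ≠ y) :
    boundaryMatrix w O α x y
      = -((if (x, y) ∈ O then w x y else 0) + if (y, x) ∈ O then w y x else 0) := by
  simp only [boundaryMatrix, Matrix.sum_apply, Matrix.smul_apply, Bmat_apply_of_ne _ hxy,
    smul_eq_mul, mul_neg, mul_add, mul_ite, mul_one, mul_zero, Finset.sum_neg_distrib,
    Finset.sum_add_distrib, Finset.sum_ite_eq']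

lemma boundaryMatrix_mulVec_eq_zero [Fintype V] (w : V → V → ℝ) {O : Finset (V × V)}
    (hO : ∀ p ∈ O, p.1 ≠ p.2) {α : V × V → ℝ} {ψ : V → ℝ} (hψ : ∀ v, ψ v ≠ 0)
    (hα : ∀ p ∈ O, α p = ψ p.2 / ψ p.1) : boundaryMatrix w O α *ᵥ ψ = 0 := by
  rw [boundaryMatrix, sum_mulVec]
  refine Finset.sum_eq_zero fun p hp => ?_
  rw [smul_mulVec, hα p hp, Bmat_mulVec_eq_zero (hO p hp) (hψ _) (hψ _), smul_zero]

end Bmat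

section paramMatrix

variable [Fintype V] [DecidableEq V] (G : SimpleGraph V) [DecidableRel G.Adj] (w : V → V → ℝ)
  {ν : ℕ} (P : V → Fin ν) (O : Finset (V × V)) (α : V × V → ℝ)

lemma paramMatrix_eq_add :
    paramMatrix G w P O α = signedLaplacian G w (partSgn P) + boundaryMatrix w O α := rfl

lemma paramMatrix_mulVec_eq_signedLaplacian_mulVec (hO : ∀ p ∈ O, p.1 ≠ p.2) {ψ : V → ℝ}
    (hψ : ∀ v, ψ v ≠ 0) (hα : ∀ p ∈ O, α p = ψ p.2 / ψ p.1) :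
    paramMatrix G w P O α *ᵥ ψ = signedLaplacian G w (partSgn P) *ᵥ ψ := by
  rw [paramMatrix_eq_add, add_mulVec, boundaryMatrix_mulVec_eq_zero w hO hψ hα, add_zero]

lemma paramMatrix_apply_of_part_eq (hO : ∀ p ∈ O, P p.1 ≠ P p.2) {x y : V} (hne : x ≠ y)
    (hxy : P x = P y) : paramMatrix G w P O α x y = if G.Adj x y then -w x y else 0 := by
  have hxyO : (x, y) ∉ O := fun h => hO _ h hxy
  have hyxO : (y, x) ∉ O := fun h => hO _ h hxy.symm
  simp [paramMatrix_eq_add, signedLaplacian_apply_of_ne _ _ _ hne,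
    boundaryMatrix_apply_of_ne _ _ _ hne, partSgn, hxy, hxyO, hyxO]

lemma paramMatrix_apply_of_part_ne (hwsymm : ∀ i j, w i j = w j i)
    (hO : ∀ p ∈ O, G.Adj p.1 p.2 ∧ P p.1 ≠ P p.2)
    (hOorient : ∀ i j, G.Adj i j → P i ≠ P j → ((i, j) ∈ O ↔ (j, i) ∉ O))
    {x y : V} (hxy : P x ≠ P y) : paramMatrix G w P O α x y = 0 := by
  have hne : x ≠ y := fun h => hxy (congrArg P h)
  rw [paramMatrix_eq_add, Matrix.add_apply, signedLaplacian_apply_of_ne _ _ _ hne,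
    boundaryMatrix_apply_of_ne _ _ _ hne, partSgn, if_neg hxy, hwsymm y x]
  by_cases hadj : G.Adj x y
  · by_cases hxyO : (x, y) ∈ O
    · simp [hadj, hxyO, (hOorient x y hadj hxy).1 hxyO]
    · have hyxO : (y, x) ∈ O := not_not.1 (mt (hOorient x y hadj hxy).2 hxyO)
      simp [hadj, hxyO, hyxO]
  · have hxyO : (x, y) ∉ O := fun h => hadj (hO _ h).1
    have hyxO : (y, x) ∉ O := fun h => hadj (hO _ h).1.symm
    simp [hadj, hxyO, hyxO]

end paramMatrix

section blocks

variable {ν : ℕ} (P : V → Fin ν)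

def glueParts (g : (k : Fin ν) → {v : V // P v = k} → ℝ) : V → ℝ :=
  fun v => g (P v) ⟨v, rfl⟩

lemma glueParts_restrict (g : (k : Fin ν) → {v : V // P v = k} → ℝ) (k : Fin ν) :
    (fun x : {v : V // P v = k} => glueParts P g x) = g k := by
  funext ⟨x, hx⟩
  subst hx
  rfl

variable [Fintype V] {M : Matrix V V ℝ}

lemma blockMatrix_mulVec (hM : ∀ x y, P x ≠ P y → M x y = 0) (ψ : V → ℝ) (k : Fin ν)
    (x : {v : V // P v = k}) : (blockMatrix M P k *ᵥ fun y => ψ y) x = (M *ᵥ ψ) x := by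
  have hout : ∑ y : {v : V // ¬P v = k}, M x y * ψ y = 0 :=
    Finset.sum_eq_zero fun y _ => by rw [hM x y (by rw [x.2]; exact Ne.symm y.2), zero_mul]
  change ∑ y : {v : V // P v = k}, M x y * ψ y = ∑ y, M x y * ψ y
  rw [← Fintype.sum_subtype_add_sum_subtype (fun v => P v = k), hout, add_zero]

lemma mulVec_glueParts_eq_smul (hM : ∀ x y, P x ≠ P y → M x y = 0) {Λ : ℝ}
    {g : (k : Fin ν) → {v : V // P v = k} → ℝ} (hg : ∀ k, blockMatrix M P k *ᵥ g k = Λ • g k) :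
    M *ᵥ glueParts P g = Λ • glueParts P g := by
  ext v
  rw [← blockMatrix_mulVec P hM _ (P v) ⟨v, rfl⟩, glueParts_restrict, hg]
  rfl

lemma blockMatrix_mulVec_eq_smul (hM : ∀ x y, P x ≠ P y → M x y = 0) {Λ : ℝ} {ψ : V → ℝ}
    (hψ : M *ᵥ ψ = Λ • ψ) (k : Fin ν) :
    (blockMatrix M P k *ᵥ fun x => ψ x) = Λ • fun x : {v : V // P v = k} => ψ x := by
  ext x
  rw [blockMatrix_mulVec P hM, hψ]
  rfl

end blocks

theorem SimpleGraph.Connected.forall_of_adj {S : Type*} {H : SimpleGraph S} (hH : H.Connected)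
    {p : S → Prop} (hp : ∀ x y, H.Adj x y → p x → p y) {x : S} (hx : p x) (y : S) : p y := by
  obtain ⟨q⟩ := hH x y
  induction q with
  | nil => exact hx
  | cons h _ ih => exact ih (hp _ _ h hx)

section ZMatrix

variable {S : Type*} [Fintype S] {A : Matrix S S ℝ} {Λ : ℝ}

lemma eq_zero_of_mulVec_eq_smul_of_neg (hA : ∀ x y, x ≠ y → A x y ≤ 0) {g : S → ℝ}
    (hg0 : ∀ x, 0 ≤ g x) (hg : A *ᵥ g = Λ • g) {x y : S} (hxy : x ≠ y) (hAxy : A x y < 0)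
    (hx : g x = 0) : g y = 0 := by
  classical
  have hrow : ∑ z ∈ Finset.univ.erase x, A x z * g z = 0 := by
    have h := congrFun hg x
    rwa [Pi.smul_apply, hx, smul_zero, mulVec, dotProduct,
      ← Finset.add_sum_erase _ _ (Finset.mem_univ x), hx, mul_zero, zero_add] at h
  have hterms := (Finset.sum_eq_zero_iff_of_nonpos fun z hz =>
    mul_nonpos_of_nonpos_of_nonneg (hA x z (Finset.ne_of_mem_erase hz).symm) (hg0 z)).1 hrow
  exact (mul_eq_zero.1 (hterms y (Finset.mem_erase.2 ⟨hxy.symm, Finset.mem_univ y⟩))).resolve_left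
    hAxy.ne

/-- Subtracting from `u` the largest multiple of `v` below it leaves a nonnegative eigenvector
with a zero, and the sign pattern of `A` propagates that zero along the edges of `H`. -/
theorem exists_pos_eq_smul_of_mulVec_eq_smul {H : SimpleGraph S} (hH : H.Connected)
    (hA : ∀ x y, x ≠ y → A x y ≤ 0) (hAH : ∀ x y, H.Adj x y → A x y < 0) {u v : S → ℝ}
    (hu : ∀ x, 0 < u x) (hv : ∀ x, 0 < v x) (hAu : A *ᵥ u = Λ • u) (hAv : A *ᵥ v = Λ • v) :
    ∃ t : ℝ, 0 < t ∧ u = t • v := by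
  have := hH.nonempty
  obtain ⟨x₀, hx₀⟩ := Finite.exists_min fun x => u x / v x
  set t := u x₀ / v x₀
  have hg0 : ∀ x, 0 ≤ (u - t • v) x := fun x => by
    have := (le_div_iff₀ (hv x)).1 (hx₀ x)
    simp only [Pi.sub_apply, Pi.smul_apply, smul_eq_mul]
    linarith
  have hg : A *ᵥ (u - t • v) = Λ • (u - t • v) := by
    rw [mulVec_sub, mulVec_smul, hAu, hAv, smul_sub, smul_comm]
  have hgx₀ : (u - t • v) x₀ = 0 := by
    simp [t, div_mul_cancel₀ _ (hv x₀).ne']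
  have hgzero := hH.forall_of_adj (p := fun x => (u - t • v) x = 0)
    (fun x y hxy => eq_zero_of_mulVec_eq_smul_of_neg hA hg0 hg hxy.ne (hAH x y hxy)) hgx₀
  exact ⟨t, div_pos (hu x₀) (hv x₀), funext fun x => sub_eq_zero.1 (hgzero x)⟩

end ZMatrix

lemma sq_eq_sq_div_sq_iff {x y a : ℝ} (hx : 0 < x) (hy : 0 < y) (ha : 0 < a) :
    x ^ 2 = y ^ 2 / a ^ 2 ↔ a = y / x := by
  rw [eq_div_iff (by positivity), eq_div_iff hx.ne',
    ← pow_left_inj₀ (mul_pos ha hx).le hy.le two_ne_zero, mul_pow, mul_comm (x ^ 2)]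

lemma IsEquipartition.lam1Block_eq_partitionEnergy [Fintype V] [DecidableEq V]
    {G : SimpleGraph V} [DecidableRel G.Adj] {w : V → V → ℝ} {ν : ℕ} {P : V → Fin ν}
    {O : Finset (V × V)} {α : V × V → ℝ} (h : IsEquipartition G w P O α) (k : Fin ν) :
    lam1Block (paramMatrix G w P O α) P k = PartitionEnergy G w P O α := by
  have : Nonempty (Fin ν) := ⟨k⟩
  rw [PartitionEnergy, iSup_congr fun l => h l k, ciSup_const]

lemma exists_pos_eq_smul_of_blockMatrix_paramMatrix [Fintype V] [DecidableEq V]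
    {G : SimpleGraph V} [DecidableRel G.Adj] {w : V → V → ℝ}
    (hwpos : ∀ i j, G.Adj i j → 0 < w i j) {ν : ℕ} {P : V → Fin ν} {O : Finset (V × V)}
    (hO : ∀ p ∈ O, P p.1 ≠ P p.2) (α : V × V → ℝ) {k : Fin ν}
    (hk : (G.induce {v | P v = k}).Connected) {Λ : ℝ} {u v : {v : V // P v = k} → ℝ}
    (hu : ∀ x, 0 < u x) (hv : ∀ x, 0 < v x)
    (hAu : blockMatrix (paramMatrix G w P O α) P k *ᵥ u = Λ • u)
    (hAv : blockMatrix (paramMatrix G w P O α) P k *ᵥ v = Λ • v) :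
    ∃ t : ℝ, 0 < t ∧ u = t • v := by
  have hentry : ∀ x y : {v : V // P v = k}, x ≠ y →
      blockMatrix (paramMatrix G w P O α) P k x y = if G.Adj x y then -w x y else 0 :=
    fun x y hxy => paramMatrix_apply_of_part_eq G w P O α hO (Subtype.val_injective.ne hxy)
      (x.2.trans y.2.symm)
  refine exists_pos_eq_smul_of_mulVec_eq_smul hk (fun x y hxy => ?_) (fun x y hxy => ?_)
    hu hv hAu hAv
  · rw [hentry x y hxy]
    split_ifs with hadj
    · exact neg_nonpos.2 (hwpos _ _ hadj).le
    · exact le_rfl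
  · rw [hentry x y hxy.ne, if_pos (show G.Adj x y from hxy)]
    exact neg_neg_iff_pos.2 (hwpos _ _ hxy)

theorem stmt12_general [Fintype V] [DecidableEq V] (G : SimpleGraph V) [DecidableRel G.Adj]
    (w : V → V → ℝ)
    (hwsymm : ∀ i j, w i j = w j i) (hwpos : ∀ i j, G.Adj i j → 0 < w i j)
    {ν : ℕ} (P : V → Fin ν)
    (hPconn : ∀ k : Fin ν, (G.induce {v | P v = k}).Connected)
    (O : Finset (V × V))
    (hO : ∀ p ∈ O, G.Adj p.1 p.2 ∧ P p.1 ≠ P p.2)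
    (hOorient : ∀ i j, G.Adj i j → P i ≠ P j → ((i, j) ∈ O ↔ (j, i) ∉ O))
    (α : V × V → ℝ) (hαpos : ∀ p ∈ O, 0 < α p)
    (hequi : IsEquipartition G w P O α)
    (f : (k : Fin ν) → {v : V // P v = k} → ℝ)
    (hfeig : ∀ k, (blockMatrix (paramMatrix G w P O α) P k).mulVec (f k)
      = lam1Block (paramMatrix G w P O α) P k • f k)
    (hfpos : ∀ k v, 0 < f k v) :
    (∃ c : Fin ν → ℝ, (∀ k, 0 < c k) ∧
        ∀ p ∈ O, c (P p.1) * f (P p.1) ⟨p.1, rfl⟩ ^ 2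
          = c (P p.2) * f (P p.2) ⟨p.2, rfl⟩ ^ 2 / α p ^ 2) ↔
    (∃ ψ : V → ℝ, (∀ v, 0 < ψ v) ∧
        (signedLaplacian G w (partSgn P)).mulVec ψ = PartitionEnergy G w P O α • ψ ∧
        ∀ p ∈ O, α p = ψ p.2 / ψ p.1) := by
  have hM : ∀ x y, P x ≠ P y → paramMatrix G w P O α x y = 0 := fun x y =>
    paramMatrix_apply_of_part_ne G w P O α hwsymm hO hOorient
  have hΛ := hequi.lam1Block_eq_partitionEnergy
  have hL : ∀ ψ : V → ℝ, (∀ v, 0 < ψ v) → (∀ p ∈ O, α p = ψ p.2 / ψ p.1) →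
      paramMatrix G w P O α *ᵥ ψ = signedLaplacian G w (partSgn P) *ᵥ ψ := fun ψ hψ =>
    paramMatrix_mulVec_eq_signedLaplacian_mulVec G w P O α (fun p hp => (hO p hp).1.ne)
      fun v => (hψ v).ne'
  constructor
  · rintro ⟨c, hc, hcf⟩
    set ψ := glueParts P fun k => √(c k) • f k
    have hψpos : ∀ v, 0 < ψ v := fun v => mul_pos (Real.sqrt_pos.2 (hc _)) (hfpos _ _)
    have hψsq : ∀ v, ψ v ^ 2 = c (P v) * f (P v) ⟨v, rfl⟩ ^ 2 := fun v => by
      rw [show ψ v = √(c (P v)) * f (P v) ⟨v, rfl⟩ from rfl, mul_pow, Real.sq_sqrt (hc _).le]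
    have hψα : ∀ p ∈ O, α p = ψ p.2 / ψ p.1 := fun p hp =>
      (sq_eq_sq_div_sq_iff (hψpos _) (hψpos _) (hαpos p hp)).1 (by rw [hψsq, hψsq]; exact hcf p hp)
    refine ⟨ψ, hψpos, ?_, hψα⟩
    rw [← hL ψ hψpos hψα]
    exact mulVec_glueParts_eq_smul P hM fun k => by rw [mulVec_smul, hfeig, hΛ, smul_comm]
  · rintro ⟨ψ, hψpos, hψeig, hψα⟩
    choose t ht hψf using fun k => exists_pos_eq_smul_of_blockMatrix_paramMatrix hwpos
      (fun p hp => (hO p hp).2) α (hPconn k) (fun x => hψpos x) (hfpos k)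
      (blockMatrix_mulVec_eq_smul P hM ((hL ψ hψpos hψα).trans hψeig) k) (by rw [hfeig, hΛ])
    refine ⟨fun k => t k ^ 2, fun k => pow_pos (ht k) 2, fun p hp => ?_⟩
    have hψ₁ : ψ p.1 = t (P p.1) * f (P p.1) ⟨p.1, rfl⟩ := congrFun (hψf (P p.1)) ⟨p.1, rfl⟩
    have hψ₂ : ψ p.2 = t (P p.2) * f (P p.2) ⟨p.2, rfl⟩ := congrFun (hψf (P p.2)) ⟨p.2, rfl⟩
    rw [← mul_pow, ← mul_pow, ← hψ₁, ← hψ₂]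
    exact (sq_eq_sq_div_sq_iff (hψpos _) (hψpos _) (hαpos p hp)).2 (hψα p hp)

/-- criticality criterion. For an equipartition `(P, α)` with positive
parameters and positive normalized ground states `f^{(k)}` of the blocks, the following are
equivalent: (i) there are `c_k > 0` with
`c_{s(i)} (f^{(s(i))}_i)² = c_{s(j)} (f^{(s(j))}_j)² / α_ij²` across every oriented boundary
edge `(i,j)`; (ii) there is an everywhere-positive eigenvector `ψ` of `L^{∂P}` with
eigenvalue `Λ(P, α)` such that `α_ij = ψ_j/ψ_i` on every oriented boundary edge. -/
theorem stmt12 [Fintype V] [DecidableEq V] (G : SimpleGraph V) [DecidableRel G.Adj]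
    (hGconn : G.Connected) (w : V → V → ℝ)
    (hwsymm : ∀ i j, w i j = w j i) (hwpos : ∀ i j, G.Adj i j → 0 < w i j)
    (hw0 : ∀ i j, ¬ G.Adj i j → w i j = 0)
    {ν : ℕ} (P : V → Fin ν) (hPsurj : Function.Surjective P)
    (hPconn : ∀ k : Fin ν, (G.induce {v | P v = k}).Connected)
    (O : Finset (V × V))
    (hO : ∀ p ∈ O, G.Adj p.1 p.2 ∧ P p.1 ≠ P p.2)
    (hOorient : ∀ i j, G.Adj i j → P i ≠ P j → ((i, j) ∈ O ↔ (j, i) ∉ O))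
    (α : V × V → ℝ) (hαpos : ∀ p ∈ O, 0 < α p)
    (hequi : IsEquipartition G w P O α)
    (f : (k : Fin ν) → {v : V // P v = k} → ℝ)
    (hfeig : ∀ k, (blockMatrix (paramMatrix G w P O α) P k).mulVec (f k)
      = lam1Block (paramMatrix G w P O α) P k • f k)
    (hfnorm : ∀ k, ∑ v, f k v ^ 2 = 1)
    (hfpos : ∀ k v, 0 < f k v) :
    (∃ c : Fin ν → ℝ, (∀ k, 0 < c k) ∧
        ∀ p ∈ O, c (P p.1) * f (P p.1) ⟨p.1, rfl⟩ ^ 2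
          = c (P p.2) * f (P p.2) ⟨p.2, rfl⟩ ^ 2 / α p ^ 2) ↔
    (∃ ψ : V → ℝ, (∀ v, 0 < ψ v) ∧
        (signedLaplacian G w (partSgn P)).mulVec ψ = PartitionEnergy G w P O α • ψ ∧
        ∀ p ∈ O, α p = ψ p.2 / ψ p.1) :=
  stmt12_general G w hwsymm hwpos P hPconn O hO hOorient α hαpos hequi f hfeig hfpos

end
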